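/- arXiv:2603.25410 — 5 statements merged into one kernel-verified Lean document; each statement's English description precedes it below -/
import Mathlib

section
/- There exist pure states |ψ_AB⟩, |ψ_AC⟩, |ψ_BC⟩ on ℂ²⊗ℂ² such that the sum of the three largest eigenvalues of H = (1/6)(|ψ_AB⟩⟨ψ_AB|⊗I_C + (|ψ_AC⟩⟨ψ_AC| acting on qubits A,C)⊗I_B + I_A⊗|ψ_BC⟩⟨ψ_BC|) strictly exceeds 5/6. Consequently H is not majorized by H_target, whose top three eigenvalues sum to 5/6. -/
open Matrix Finset ComplexOrder

noncomputable section

abbrev Q3 : Type := Fin 2 × Fin 2 × Fin 2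

/-- Ky Fan `r`-sum: the largest possible sum of `r` eigenvalues of a Hermitian matrix. -/
noncomputable def kyFan {n : Type*} [Fintype n] [DecidableEq n]
    {A : Matrix n n ℂ} (hA : A.IsHermitian) (r : ℕ) : ℝ :=
  sSup {x : ℝ | ∃ s : Finset n, s.card = r ∧ x = ∑ i ∈ s, hA.eigenvalues i}

/-- Eigenvalue majorization of Hermitian matrices. -/
def Majorized {n : Type*} [Fintype n] [DecidableEq n]
    {A B : Matrix n n ℂ} (hA : A.IsHermitian) (hB : B.IsHermitian) : Prop :=
  (∀ r : ℕ, kyFan hA r ≤ kyFan hB r) ∧ A.trace = B.trace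

/-- Eigenvalues of a Hermitian matrix sorted in nonincreasing order. -/
noncomputable def sortedEigDesc {n : ℕ} {A : Matrix (Fin n) (Fin n) ℂ}
    (hA : A.IsHermitian) : Fin n → ℝ :=
  fun i => (hA.eigenvalues ∘ Tuple.sort hA.eigenvalues) i.rev

def IsDensity {n : Type*} [Fintype n] [DecidableEq n] (ρ : Matrix n n ℂ) : Prop :=
  ρ.PosSemidef ∧ ρ.trace = 1

def P0 : Matrix (Fin 2) (Fin 2) ℂ := fun i j => if i = 0 ∧ j = 0 then 1 else 0

def P00 : Matrix (Fin 2 × Fin 2) (Fin 2 × Fin 2) ℂ :=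
  fun p q => P0 p.1 q.1 * P0 p.2 q.2

/-- Projector onto a pure two-qubit state. -/
def proj2 (v : Fin 2 × Fin 2 → ℂ) : Matrix (Fin 2 × Fin 2) (Fin 2 × Fin 2) ℂ :=
  fun p q => v p * (starRingEnd ℂ) (v q)

/-- Projector onto a pure three-qubit state. -/
def projQ3 (v : Q3 → ℂ) : Matrix Q3 Q3 ℂ :=
  fun p q => v p * (starRingEnd ℂ) (v q)

/-- Embed a two-body operator on qubits A,B, acting as identity on C. -/
def embAB (M : Matrix (Fin 2 × Fin 2) (Fin 2 × Fin 2) ℂ) : Matrix Q3 Q3 ℂ :=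
  fun p q => M (p.1, p.2.1) (q.1, q.2.1) * (if p.2.2 = q.2.2 then 1 else 0)

/-- Embed a two-body operator on qubits A,C, acting as identity on B. -/
def embAC (M : Matrix (Fin 2 × Fin 2) (Fin 2 × Fin 2) ℂ) : Matrix Q3 Q3 ℂ :=
  fun p q => M (p.1, p.2.2) (q.1, q.2.2) * (if p.2.1 = q.2.1 then 1 else 0)

/-- Embed a two-body operator on qubits B,C, acting as identity on A. -/
def embBC (M : Matrix (Fin 2 × Fin 2) (Fin 2 × Fin 2) ℂ) : Matrix Q3 Q3 ℂ :=
  fun p q => M p.2 q.2 * (if p.1 = q.1 then 1 else 0)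

def embA (M : Matrix (Fin 2) (Fin 2) ℂ) : Matrix Q3 Q3 ℂ :=
  fun p q => M p.1 q.1 * (if p.2 = q.2 then 1 else 0)

def embB (M : Matrix (Fin 2) (Fin 2) ℂ) : Matrix Q3 Q3 ℂ :=
  fun p q => M p.2.1 q.2.1 * (if (p.1, p.2.2) = (q.1, q.2.2) then 1 else 0)

def embC (M : Matrix (Fin 2) (Fin 2) ℂ) : Matrix Q3 Q3 ℂ :=
  fun p q => M p.2.2 q.2.2 * (if (p.1, p.2.1) = (q.1, q.2.1) then 1 else 0)

def margA (ρ : Matrix Q3 Q3 ℂ) : Matrix (Fin 2) (Fin 2) ℂ :=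
  fun i j => ∑ b : Fin 2, ∑ c : Fin 2, ρ (i, b, c) (j, b, c)

def margB (ρ : Matrix Q3 Q3 ℂ) : Matrix (Fin 2) (Fin 2) ℂ :=
  fun i j => ∑ a : Fin 2, ∑ c : Fin 2, ρ (a, i, c) (a, j, c)

def margC (ρ : Matrix Q3 Q3 ℂ) : Matrix (Fin 2) (Fin 2) ℂ :=
  fun i j => ∑ a : Fin 2, ∑ b : Fin 2, ρ (a, b, i) (a, b, j)

def margAB (ρ : Matrix Q3 Q3 ℂ) : Matrix (Fin 2 × Fin 2) (Fin 2 × Fin 2) ℂ :=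
  fun p q => ∑ c : Fin 2, ρ (p.1, p.2, c) (q.1, q.2, c)

def margAC (ρ : Matrix Q3 Q3 ℂ) : Matrix (Fin 2 × Fin 2) (Fin 2 × Fin 2) ℂ :=
  fun p q => ∑ b : Fin 2, ρ (p.1, b, p.2) (q.1, b, q.2)

def margBC (ρ : Matrix Q3 Q3 ℂ) : Matrix (Fin 2 × Fin 2) (Fin 2 × Fin 2) ℂ :=
  fun p q => ∑ a : Fin 2, ρ (a, p.1, p.2) (a, q.1, q.2)

def sigmaY : Matrix (Fin 2) (Fin 2) ℂ := !![0, -Complex.I; Complex.I, 0]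

/-- The alignment target `H_target = (1/6)(P₀⊗P₀⊗I + P₀⊗I⊗P₀ + I⊗P₀⊗P₀)`. -/
def Htarget : Matrix Q3 Q3 ℂ := (1/6 : ℂ) • (embAB P00 + embAC P00 + embBC P00)

/-- The alignment operator built from three two-body pure states. -/
def Hof (u v w : Fin 2 × Fin 2 → ℂ) : Matrix Q3 Q3 ℂ :=
  (1/6 : ℂ) • (embAB (proj2 u) + embAC (proj2 v) + embBC (proj2 w))

end

/-!
The eigenvalues of `Htarget` are `1/2, 1/6, 1/6, 1/6, 0, 0, 0, 0`, so its Ky Fan 3-sum is `5/6`: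
for a diagonal Hermitian matrix any sum of `k` eigenvalues equals `Re tr (A P)` for a rank-`k`
projection `P`, and such a trace is a combination `∑ dᵢ cᵢ` of the diagonal entries with
weights `0 ≤ cᵢ ≤ 1`, `∑ cᵢ = k`, hence at most the sum of the `k` largest `dᵢ`. In the other
direction, Ky Fan's maximum principle gives `Re tr (H P) ≤ kyFan H k` for every rank-`k`
projection `P`. For the witness `H` we take `P` the projection onto three exactly orthogonal
integer vectors close to its top eigenvectors; the resulting rational value
`≈ 0.83403` exceeds `5/6 ≈ 0.83333`, so `H` cannot be majorized by `Htarget`.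
-/

section Knapsack

variable {ι : Type*} [Fintype ι]

theorem exists_card_eq_threshold (f : ι → ℝ) {k : ℕ} (hk : k ≤ Fintype.card ι) :
    ∃ s : Finset ι, s.card = k ∧ ∃ m : ℝ, (∀ i ∈ s, m ≤ f i) ∧ ∀ i ∉ s, f i ≤ m := by
  classical
  obtain ⟨s, hs, hmax⟩ := (univ.powersetCard k).exists_max_image (fun s => ∑ i ∈ s, f i)
    (powersetCard_nonempty.2 (by simpa using hk))
  rw [mem_powersetCard] at hs
  have exchange : ∀ i ∈ s, ∀ j ∉ s, f j ≤ f i := by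
    intro i hi j hj
    have hj' : j ∉ s.erase i := fun h => hj (mem_of_mem_erase h)
    have hcard : (insert j (s.erase i)).card = k := by
      rw [card_insert_of_notMem hj', card_erase_of_mem hi, ← hs.2]
      exact Nat.sub_add_cancel (card_pos.2 ⟨i, hi⟩)
    have := hmax _ (mem_powersetCard.2 ⟨subset_univ _, hcard⟩)
    rw [sum_insert hj', ← add_sum_erase s f hi] at this
    linarith
  refine ⟨s, hs.2, ?_⟩
  rcases s.eq_empty_or_nonempty with rfl | hne
  · exact ⟨∑ i, |f i|, by simp, fun i _ =>
      (le_abs_self _).trans (single_le_sum (fun j _ => abs_nonneg (f j)) (mem_univ i))⟩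
  · exact ⟨s.inf' hne f, fun i hi => inf'_le f hi,
      fun j hj => le_inf' hne f fun i hi => exchange i hi j hj⟩

theorem sum_mul_le_sum_of_threshold {f c : ι → ℝ} {s : Finset ι} {m : ℝ}
    (hs : ∀ i ∈ s, m ≤ f i) (hsc : ∀ i ∉ s, f i ≤ m)
    (hc0 : ∀ i, 0 ≤ c i) (hc1 : ∀ i, c i ≤ 1) (hc : ∑ i, c i = s.card) :
    ∑ i, f i * c i ≤ ∑ i ∈ s, f i := by
  classical
  have key : ∑ i ∈ s, f i - ∑ i, f i * c i =
      ∑ i, (f i - m) * ((if i ∈ s then 1 else 0) - c i) := by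
    simp only [mul_sub, sub_mul, sum_sub_distrib, mul_ite, mul_one, mul_zero, sum_ite_mem,
      univ_inter, ← mul_sum, hc, sum_const, nsmul_eq_mul]
    ring
  have : 0 ≤ ∑ i, (f i - m) * ((if i ∈ s then 1 else 0) - c i) := by
    refine sum_nonneg fun i _ => ?_
    split_ifs with hi
    · exact mul_nonneg (sub_nonneg.2 (hs i hi)) (sub_nonneg.2 (hc1 i))
    · exact mul_nonneg_of_nonpos_of_nonpos (sub_nonpos.2 (hsc i hi)) (by linarith [hc0 i])
  linarith

theorem exists_card_eq_sum_mul_le_sum (f : ι → ℝ) {c : ι → ℝ}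
    (hc0 : ∀ i, 0 ≤ c i) (hc1 : ∀ i, c i ≤ 1) {k : ℕ} (hc : ∑ i, c i = k) :
    ∃ s : Finset ι, s.card = k ∧ ∑ i, f i * c i ≤ ∑ i ∈ s, f i := by
  have hk : (k : ℝ) ≤ Fintype.card ι := by
    simpa [← hc] using sum_le_sum fun i (_ : i ∈ univ) => hc1 i
  obtain ⟨s, hs, m, hsm, hscm⟩ := exists_card_eq_threshold f (k := k) (by exact_mod_cast hk)
  exact ⟨s, hs, sum_mul_le_sum_of_threshold hsm hscm hc0 hc1 (by rw [hs, hc])⟩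

end Knapsack

section Projections

variable {n : Type*} [Fintype n] [DecidableEq n]

open scoped MatrixOrder in
theorem IsStarProjection.re_diag_mem_Icc {P : Matrix n n ℂ} (hP : IsStarProjection P) (i : n) :
    0 ≤ (P i i).re ∧ (P i i).re ≤ 1 := by
  have h0 : 0 ≤ P i i := hP.nonneg.posSemidef.diag_nonneg
  have h1 : 0 ≤ (1 - P) i i := hP.one_sub.nonneg.posSemidef.diag_nonneg
  rw [Complex.nonneg_iff] at h0 h1
  simp only [Matrix.sub_apply, one_apply_eq, Complex.sub_re, Complex.one_re] at h1
  exact ⟨h0.1, by linarith [h1.1]⟩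

theorem exists_card_eq_re_trace_diagonal_mul_le (d : n → ℝ) {P : Matrix n n ℂ}
    (hP : IsStarProjection P) {k : ℕ} (hk : P.trace = k) :
    ∃ s : Finset n, s.card = k ∧
      (diagonal (fun i => (d i : ℂ)) * P).trace.re ≤ ∑ i ∈ s, d i := by
  have htr : (diagonal (fun i => (d i : ℂ)) * P).trace.re = ∑ i, d i * (P i i).re := by
    simp [trace, diagonal_mul, Complex.re_sum]
  have hc : ∑ i, (P i i).re = k := by
    simpa [trace, Complex.re_sum] using congrArg Complex.re hk
  rw [htr]
  exact exists_card_eq_sum_mul_le_sum d (fun i => (hP.re_diag_mem_Icc i).1)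
    (fun i => (hP.re_diag_mem_Icc i).2) hc

theorem isStarProjection_diagonal_indicator (s : Finset n) :
    IsStarProjection (diagonal fun i => if i ∈ s then (1 : ℂ) else 0) := by
  refine ⟨?_, ?_⟩
  · simp [IsIdempotentElem, diagonal_mul_diagonal]
  · simp [IsSelfAdjoint, star_eq_conjTranspose, diagonal_conjTranspose]

theorem trace_diagonal_indicator (s : Finset n) :
    (diagonal fun i => if i ∈ s then (1 : ℂ) else 0).trace = s.card := by
  simp [trace_diagonal, sum_ite_mem]

theorem trace_diagonal_mul_diagonal_indicator (d : n → ℂ) (s : Finset n) :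
    (diagonal d * diagonal fun i => if i ∈ s then (1 : ℂ) else 0).trace = ∑ i ∈ s, d i := by
  simp [diagonal_mul_diagonal, trace_diagonal, sum_ite_mem]

theorem trace_conjStarAlgAut (u : unitary (Matrix n n ℂ)) (X : Matrix n n ℂ) :
    (Unitary.conjStarAlgAut ℂ _ u X).trace = X.trace := by
  rw [Unitary.conjStarAlgAut_apply, trace_mul_cycle, Unitary.coe_star_mul_self, one_mul]

end Projections

section KyFan

variable {n : Type*} [Fintype n] [DecidableEq n] {A : Matrix n n ℂ}

theorem bddAbove_kyFan_set (hA : A.IsHermitian) (r : ℕ) :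
    BddAbove {x : ℝ | ∃ s : Finset n, s.card = r ∧ x = ∑ i ∈ s, hA.eigenvalues i} :=
  ((Set.finite_range fun s : Finset n => ∑ i ∈ s, hA.eigenvalues i).subset
    (by rintro _ ⟨s, -, rfl⟩; exact ⟨s, rfl⟩)).bddAbove

theorem sum_eigenvalues_le_kyFan (hA : A.IsHermitian) (s : Finset n) :
    ∑ i ∈ s, hA.eigenvalues i ≤ kyFan hA s.card :=
  le_csSup (bddAbove_kyFan_set hA _) ⟨s, rfl, rfl⟩

theorem kyFan_le (hA : A.IsHermitian) {r : ℕ} (hr : r ≤ Fintype.card n) {b : ℝ}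
    (h : ∀ s : Finset n, s.card = r → ∑ i ∈ s, hA.eigenvalues i ≤ b) : kyFan hA r ≤ b := by
  obtain ⟨s, -, hs⟩ := exists_subset_card_eq (s := (univ : Finset n)) (by simpa using hr)
  exact csSup_le ⟨_, s, hs, rfl⟩ fun _ ⟨t, ht, hx⟩ => hx ▸ h t ht

theorem Matrix.IsHermitian.trace_mul_eq_trace_diagonal_mul (hA : A.IsHermitian)
    (P : Matrix n n ℂ) :
    (A * P).trace = (diagonal (fun i => (hA.eigenvalues i : ℂ)) *
      (Unitary.conjStarAlgAut ℂ _ hA.eigenvectorUnitary).symm P).trace := by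
  conv_lhs => rw [hA.spectral_theorem,
    ← (Unitary.conjStarAlgAut ℂ _ hA.eigenvectorUnitary).apply_symm_apply P, ← map_mul,
    trace_conjStarAlgAut]
  rfl

theorem Matrix.IsHermitian.re_trace_mul_le_kyFan (hA : A.IsHermitian) {P : Matrix n n ℂ}
    (hP : IsStarProjection P) {k : ℕ} (hk : P.trace = k) : (A * P).trace.re ≤ kyFan hA k := by
  set φ := Unitary.conjStarAlgAut ℂ _ hA.eigenvectorUnitary
  have hk' : (φ.symm P).trace = k := by
    rw [← trace_conjStarAlgAut hA.eigenvectorUnitary, ← hk]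
    exact congrArg trace (φ.apply_symm_apply P)
  obtain ⟨s, hs, hle⟩ :=
    exists_card_eq_re_trace_diagonal_mul_le hA.eigenvalues (hP.map φ.symm) hk'
  rw [hA.trace_mul_eq_trace_diagonal_mul]
  exact hs ▸ hle.trans (sum_eigenvalues_le_kyFan hA s)

theorem Matrix.IsHermitian.exists_sum_eigenvalues_le_of_eq_diagonal (hA : A.IsHermitian)
    {d : n → ℝ} (hAd : A = diagonal fun i => (d i : ℂ)) (s : Finset n) :
    ∃ t : Finset n, t.card = s.card ∧ ∑ i ∈ s, hA.eigenvalues i ≤ ∑ i ∈ t, d i := by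
  set φ := Unitary.conjStarAlgAut ℂ _ hA.eigenvectorUnitary
  set E : Matrix n n ℂ := diagonal fun i => if i ∈ s then 1 else 0
  have hsum : ∑ i ∈ s, hA.eigenvalues i = (A * φ E).trace.re := by
    rw [hA.trace_mul_eq_trace_diagonal_mul, φ.symm_apply_apply,
      trace_diagonal_mul_diagonal_indicator]
    simp [Complex.re_sum]
  have hE : (φ E).trace = s.card := by
    rw [trace_conjStarAlgAut, trace_diagonal_indicator]
  rw [hsum, hAd]
  exact exists_card_eq_re_trace_diagonal_mul_le d
    ((isStarProjection_diagonal_indicator s).map φ) hE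

end KyFan

section Target

noncomputable def targetWeight : Q3 → ℝ := fun p =>
  ![![![1/2, 1/6], ![1/6, 0]], ![![1/6, 0], ![0, 0]]] p.1 p.2.1 p.2.2

theorem Htarget_eq_diagonal : Htarget = diagonal fun p => (targetWeight p : ℂ) := by
  ext ⟨a, b, c⟩ ⟨a', b', c'⟩
  fin_cases a <;> fin_cases b <;> fin_cases c <;> fin_cases a' <;> fin_cases b' <;>
    fin_cases c' <;>
    norm_num [Htarget, embAB, embAC, embBC, P00, P0, targetWeight, diagonal_apply]

theorem targetWeight_le (p : Q3) : targetWeight p ≤ 1/6 + if p = 0 then 1/3 else 0 := by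
  obtain ⟨a, b, c⟩ := p
  fin_cases a <;> fin_cases b <;> fin_cases c <;> norm_num [targetWeight, Prod.ext_iff]

theorem sum_targetWeight_le {t : Finset Q3} (ht : t.card = 3) :
    ∑ p ∈ t, targetWeight p ≤ 5/6 := by
  calc ∑ p ∈ t, targetWeight p ≤ ∑ p ∈ t, (1/6 + if p = 0 then (1/3 : ℝ) else 0) :=
        sum_le_sum fun p _ => targetWeight_le p
    _ = 1/2 + if 0 ∈ t then 1/3 else 0 := by
        rw [sum_add_distrib, sum_const, ht, sum_ite_eq']; norm_num
    _ ≤ 5/6 := by split_ifs <;> norm_num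

theorem kyFan_Htarget (hT : Htarget.IsHermitian) : kyFan hT 3 = 5/6 := by
  refine le_antisymm (kyFan_le hT (by simp) fun s hs => ?_) ?_
  · obtain ⟨t, ht, hle⟩ := hT.exists_sum_eigenvalues_le_of_eq_diagonal Htarget_eq_diagonal s
    exact hle.trans (sum_targetWeight_le (ht.trans hs))
  · set s : Finset Q3 := {(0, 0, 0), (0, 0, 1), (0, 1, 0)}
    have hs : s.card = 3 := by decide
    have hval : (Htarget * diagonal fun p => if p ∈ s then 1 else 0).trace.re = 5/6 := by
      rw [Htarget_eq_diagonal, trace_diagonal_mul_diagonal_indicator]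
      norm_num [s, targetWeight]
    rw [← hval, ← hs]
    exact hT.re_trace_mul_le_kyFan (isStarProjection_diagonal_indicator s)
      (trace_diagonal_indicator s)

end Target

section RankOne

variable {n : Type*} [Fintype n]

noncomputable def rankOneProj (x : n → ℂ) : Matrix n n ℂ :=
  (star x ⬝ᵥ x)⁻¹ • vecMulVec x (star x)

theorem rankOneProj_mul_rankOneProj (x y : n → ℂ) :
    rankOneProj x * rankOneProj y = ((star x ⬝ᵥ x)⁻¹ * (star x ⬝ᵥ y) * (star y ⬝ᵥ y)⁻¹) •
      vecMulVec x (star y) := by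
  simp only [rankOneProj, smul_mul_smul_comm, vecMulVec_mul_vecMulVec, vecMulVec_smul, smul_smul]
  ring_nf

theorem isStarProjection_rankOneProj {x : n → ℂ} (hx : x ≠ 0) :
    IsStarProjection (rankOneProj x) := by
  have hxx : star x ⬝ᵥ x ≠ 0 := dotProduct_star_self_eq_zero.not.2 hx
  refine ⟨?_, ?_⟩
  · rw [IsIdempotentElem, rankOneProj_mul_rankOneProj, rankOneProj, mul_inv_cancel_right₀ hxx]
  · have hreal : star (star x ⬝ᵥ x) = star x ⬝ᵥ x := (star_dotProduct x x).symm
    rw [IsSelfAdjoint, rankOneProj, star_smul, star_inv₀, hreal, star_eq_conjTranspose,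
      conjTranspose_vecMulVec, star_star]

theorem trace_mul_rankOneProj (A : Matrix n n ℂ) (x : n → ℂ) :
    (A * rankOneProj x).trace = (star x ⬝ᵥ A *ᵥ x) / (star x ⬝ᵥ x) := by
  rw [rankOneProj, Matrix.mul_smul, trace_smul, mul_vecMulVec, trace_vecMulVec, smul_eq_mul,
    dotProduct_comm (A *ᵥ x), div_eq_inv_mul]

theorem isStarProjection_sum_rankOneProj {ι : Type*} (s : Finset ι) {x : ι → n → ℂ}
    (hx : ∀ i, x i ≠ 0) (horth : Pairwise fun i j => star (x i) ⬝ᵥ x j = 0) :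
    IsStarProjection (∑ i ∈ s, rankOneProj (x i)) := by
  classical
  induction s using Finset.induction_on with
  | empty => simp
  | insert a s ha ih =>
    rw [sum_insert ha]
    refine (isStarProjection_rankOneProj (hx a)).add ih ?_
    rw [mul_sum]
    refine sum_eq_zero fun i hi => ?_
    rw [rankOneProj_mul_rankOneProj, horth (ne_of_mem_of_not_mem hi ha).symm]
    simp

theorem trace_map_ratCast_mul_rankOneProj (M : Matrix n n ℚ)
    (y : n → ℚ) :
    (M.map ((↑) : ℚ → ℂ) * rankOneProj fun p => (y p : ℂ)).trace =
      ((y ⬝ᵥ M *ᵥ y / (y ⬝ᵥ y) : ℚ) : ℂ) := by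
  simp [trace_mul_rankOneProj, dotProduct, mulVec]

theorem trace_rankOneProj [DecidableEq n] {x : n → ℂ} (hx : x ≠ 0) :
    (rankOneProj x).trace = 1 := by
  simpa [div_self (dotProduct_star_self_eq_zero.not.2 hx)] using trace_mul_rankOneProj 1 x

end RankOne

section Witness

noncomputable def normalizedState {ι : Type*} [Fintype ι] (c : ι → ℚ) : ι → ℂ :=
  fun p => ((c p / √(∑ q, (c q : ℝ) ^ 2) : ℝ) : ℂ)

theorem sum_norm_sq_normalizedState {ι : Type*} [Fintype ι] {c : ι → ℚ} (hc : c ≠ 0) :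
    ∑ p, ‖normalizedState c p‖ ^ 2 = 1 := by
  have hpos : 0 < ∑ q, (c q : ℝ) ^ 2 := by
    obtain ⟨q, hq⟩ := Function.ne_iff.1 hc
    have hq' : (c q : ℝ) ≠ 0 := by exact_mod_cast hq
    exact lt_of_lt_of_le (by positivity)
      (single_le_sum (fun r _ => sq_nonneg (c r : ℝ)) (mem_univ q))
  simp only [normalizedState, Complex.norm_real, Real.norm_eq_abs, sq_abs, div_pow,
    Real.sq_sqrt hpos.le, ← sum_div]
  exact div_self hpos.ne'

theorem proj2_normalizedState (c : Fin 2 × Fin 2 → ℚ) {N : ℚ} (hN : ∑ q, c q ^ 2 = N) :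
    proj2 (normalizedState c) = fun p q => ((c p * c q / N : ℚ) : ℂ) := by
  have hN' : ∑ q, (c q : ℝ) ^ 2 = N := by exact_mod_cast hN
  funext p q
  simp only [proj2, normalizedState, Complex.conj_ofReal, ← Complex.ofReal_mul, hN']
  rw [div_mul_div_comm, Real.mul_self_sqrt (by rw [← hN']; positivity)]
  push_cast
  rfl

def coeffAB : Fin 2 × Fin 2 → ℚ := fun p => ![![0, 6], ![-9, -10]] p.1 p.2
def coeffAC : Fin 2 × Fin 2 → ℚ := fun p => ![![-2, -4], ![-1, 5]] p.1 p.2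
def coeffBC : Fin 2 × Fin 2 → ℚ := fun p => ![![-6, -1], ![-4, 0]] p.1 p.2

theorem sum_sq_coeffAB : ∑ p, coeffAB p ^ 2 = 217 := by
  norm_num [coeffAB, Fintype.sum_prod_type]

theorem sum_sq_coeffAC : ∑ p, coeffAC p ^ 2 = 46 := by
  norm_num [coeffAC, Fintype.sum_prod_type]

theorem sum_sq_coeffBC : ∑ p, coeffBC p ^ 2 = 53 := by
  norm_num [coeffBC, Fintype.sum_prod_type]

def witnessMatrix : Matrix Q3 Q3 ℚ := fun p q =>
  (coeffAB (p.1, p.2.1) * coeffAB (q.1, q.2.1) / 217 * (if p.2.2 = q.2.2 then 1 else 0)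
    + coeffAC (p.1, p.2.2) * coeffAC (q.1, q.2.2) / 46 * (if p.2.1 = q.2.1 then 1 else 0)
    + coeffBC p.2 * coeffBC q.2 / 53 * (if p.1 = q.1 then 1 else 0)) / 6

theorem Hof_normalizedState :
    Hof (normalizedState coeffAB) (normalizedState coeffAC) (normalizedState coeffBC) =
      witnessMatrix.map (↑) := by
  ext p q
  simp only [Hof, proj2_normalizedState _ sum_sq_coeffAB, proj2_normalizedState _ sum_sq_coeffAC,
    proj2_normalizedState _ sum_sq_coeffBC, Matrix.smul_apply, Matrix.add_apply, embAB, embAC,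
    embBC, witnessMatrix, map_apply, smul_eq_mul]
  split_ifs <;> push_cast <;> ring

/-- Integer approximations of the top three eigenvectors of the witness `Hof`,
Gram–Schmidt-orthogonalized. -/
def probeVectors : Fin 3 → Q3 → ℚ := fun i p =>
  ![![![![6, 4], ![8, 9]], ![![-9, -11], ![-7, -12]]],
    ![![![562, 868], ![-632, 1731]], ![![4485, -1721], ![3883, -2604]]],
    ![![![2622626, 1629453], ![792464, -1253638]], ![![655915, -903172], ![-15231, 1787401]]]]
    i p.1 p.2.1 p.2.2

theorem probeVectors_orthogonal : Pairwise fun i j => probeVectors i ⬝ᵥ probeVectors j = 0 := by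
  intro i j hij
  fin_cases i <;> fin_cases j <;> (try exact absurd rfl hij) <;>
    norm_num [probeVectors, dotProduct, Fintype.sum_prod_type]

theorem five_sixths_lt_sum_rayleigh :
    5/6 < ∑ i, probeVectors i ⬝ᵥ witnessMatrix *ᵥ probeVectors i /
      (probeVectors i ⬝ᵥ probeVectors i) := by
  norm_num [Fin.sum_univ_three, probeVectors, witnessMatrix, coeffAB, coeffAC, coeffBC,
    dotProduct, mulVec, Fintype.sum_prod_type, Matrix.cons_val_two, Matrix.tail_cons]

theorem five_sixths_lt_kyFan_witness
    (hH : (Hof (normalizedState coeffAB) (normalizedState coeffAC)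
      (normalizedState coeffBC)).IsHermitian) : 5/6 < kyFan hH 3 := by
  set x : Fin 3 → Q3 → ℂ := fun i p => (probeVectors i p : ℂ)
  have hx : ∀ i, x i ≠ 0 := fun i h => by
    have := congrFun h 0
    fin_cases i <;> simp [x, probeVectors] at this
  have horth : Pairwise fun i j => star (x i) ⬝ᵥ x j = 0 := fun i j hij => by
    simpa [x, dotProduct] using congrArg ((↑) : ℚ → ℂ) (probeVectors_orthogonal hij)
  have htr : (∑ i, rankOneProj (x i)).trace = (3 : ℕ) := by
    simp [trace_sum, trace_rankOneProj (hx _)]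
  have hval : (Hof (normalizedState coeffAB) (normalizedState coeffAC)
      (normalizedState coeffBC) * ∑ i, rankOneProj (x i)).trace.re =
      ((∑ i, probeVectors i ⬝ᵥ witnessMatrix *ᵥ probeVectors i /
        (probeVectors i ⬝ᵥ probeVectors i) : ℚ) : ℝ) := by
    simp only [Hof_normalizedState, mul_sum, trace_sum, x, trace_map_ratCast_mul_rankOneProj,
      Complex.re_sum, Complex.ratCast_re, Rat.cast_sum]
  calc (5/6 : ℝ) = ((5/6 : ℚ) : ℝ) := by norm_num
    _ < _ := Rat.cast_lt.2 five_sixths_lt_sum_rayleigh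
    _ = _ := hval.symm
    _ ≤ kyFan hH 3 :=
      hH.re_trace_mul_le_kyFan (isStarProjection_sum_rankOneProj univ hx horth) htr

end Witness

theorem stmt1 (hT : Htarget.IsHermitian) :
    kyFan hT 3 = 5/6 ∧
    ∃ u v w : Fin 2 × Fin 2 → ℂ,
      (∑ p, ‖u p‖ ^ 2 = 1) ∧ (∑ p, ‖v p‖ ^ 2 = 1) ∧ (∑ p, ‖w p‖ ^ 2 = 1) ∧
      ∀ hH : (Hof u v w).IsHermitian, 5/6 < kyFan hH 3 ∧ ¬ Majorized hH hT := by
  refine ⟨kyFan_Htarget hT, normalizedState coeffAB, normalizedState coeffAC,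
    normalizedState coeffBC, sum_norm_sq_normalizedState fun h => ?_,
    sum_norm_sq_normalizedState fun h => ?_, sum_norm_sq_normalizedState fun h => ?_,
    fun hH => ⟨five_sixths_lt_kyFan_witness hH, fun hmaj => ?_⟩⟩
  · simpa [coeffAB] using congrFun h (0, 1)
  · simpa [coeffAC] using congrFun h (0, 0)
  · simpa [coeffBC] using congrFun h (0, 0)
  · linarith [hmaj.1 3, kyFan_Htarget hT, five_sixths_lt_kyFan_witness hH]
end

section
/- For any density matrix ρ on ℂ²⊗ℂ²⊗ℂ², the operator ρ̃ := (σ_y⊗σ_y⊗σ_y) ρ^T (σ_y⊗σ_y⊗σ_y) equals I − ρ_A⊗I⊗I − I⊗ρ_B⊗I − I⊗I⊗ρ_C + ρ_{AB}⊗I + (ρ_{AC} acting on qubits 1,3) + I⊗ρ_{BC} − ρ, where ρ_A, ρ_B, ρ_C and ρ_{AB}, ρ_{AC}, ρ_{BC} denote the one- and two-body partial traces of ρ. -/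
open Matrix Finset ComplexOrder

noncomputable def Y3 : Matrix Q3 Q3 ℂ :=
  fun p q => sigmaY p.1 q.1 * sigmaY p.2.1 q.2.1 * sigmaY p.2.2 q.2.2


private def fl (a : Fin 2) : Fin 2 := if a = 0 then 1 else 0

private def Fl (p : Q3) : Q3 := (fl p.1, fl p.2.1, fl p.2.2)

private def ee (a : Fin 2) : ℂ := if a = 0 then -Complex.I else Complex.I

private def ee' (a : Fin 2) : ℂ := if a = 0 then Complex.I else -Complex.I

private def eps (p : Q3) : ℂ := ee p.1 * ee p.2.1 * ee p.2.2

private def eps' (p : Q3) : ℂ := ee' p.1 * ee' p.2.1 * ee' p.2.2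

private lemma L1 (M : Matrix Q3 Q3 ℂ) (p q : Q3) :
    (Y3 * M) p q = eps p * M (Fl p) q := by
  obtain ⟨a, b, c⟩ := p
  rw [Matrix.mul_apply]
  rw [Fintype.sum_prod_type]
  simp only [Fintype.sum_prod_type, Fin.sum_univ_two]
  fin_cases a <;> fin_cases b <;> fin_cases c <;>
    simp [Y3, sigmaY, eps, ee, Fl, fl]

private lemma L2 (M : Matrix Q3 Q3 ℂ) (p q : Q3) :
    (M * Y3) p q = eps' q * M p (Fl q) := by
  obtain ⟨a, b, c⟩ := q
  rw [Matrix.mul_apply]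
  simp only [Fintype.sum_prod_type, Fin.sum_univ_two]
  fin_cases a <;> fin_cases b <;> fin_cases c <;>
    simp [Y3, sigmaY, eps', ee', Fl, fl] <;> ring


private lemma eemul (a d : Fin 2) : ee a * ee' d = if a = d then 1 else -1 := by
  fin_cases a <;> fin_cases d <;> simp [ee, ee', Complex.I_mul_I]

private lemma key (ρ : Matrix Q3 Q3 ℂ) (p q : Q3) :
    (Y3 * ρᵀ * Y3) p q =
      (if p.1 = q.1 then 1 else -1) * (if p.2.1 = q.2.1 then 1 else -1) *
        (if p.2.2 = q.2.2 then 1 else -1) * ρ (Fl q) (Fl p) := by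
  rw [L2, L1, Matrix.transpose_apply]
  rw [← eemul p.1 q.1, ← eemul p.2.1 q.2.1, ← eemul p.2.2 q.2.2]
  simp only [eps, eps']
  ring

set_option maxHeartbeats 1000000 in
theorem stmt4 (ρ : Matrix Q3 Q3 ℂ) (hρ : IsDensity ρ) :
    Y3 * ρᵀ * Y3 =
      1 - embA (margA ρ) - embB (margB ρ) - embC (margC ρ)
        + embAB (margAB ρ) + embAC (margAC ρ) + embBC (margBC ρ) - ρ := by
  obtain ⟨hpsd, htr⟩ := hρ
  have ht : ρ (0,0,0) (0,0,0) + ρ (0,0,1) (0,0,1) + ρ (0,1,0) (0,1,0) + ρ (0,1,1) (0,1,1)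
      + ρ (1,0,0) (1,0,0) + ρ (1,0,1) (1,0,1) + ρ (1,1,0) (1,1,0) + ρ (1,1,1) (1,1,1) = 1 := by
    simpa [Matrix.trace, Fintype.sum_prod_type, Fin.sum_univ_two, Matrix.diag,
      add_assoc] using htr
  ext ⟨a,b,c⟩ ⟨d,e,f⟩
  rw [key]
  fin_cases a <;> fin_cases b <;> fin_cases c <;> fin_cases d <;> fin_cases e <;> fin_cases f <;>
    simp only [Fl, fl, Fin.sum_univ_two,
      embA, embB, embC, embAB, embAC, embBC, margA, margB, margC, margAB, margAC, margBC,
      Matrix.one_apply, Matrix.sub_apply, Matrix.add_apply,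
      Fin.isValue, Fin.mk_one, Fin.zero_eta, Prod.mk.injEq, if_true, if_false,
      reduceIte, Fin.reduceEq, one_ne_zero, zero_ne_one, and_true, and_false, true_and,
      false_and, and_self, mul_one, mul_zero, one_mul, zero_mul, neg_mul] <;>
    first
      | linear_combination ht
      | ring
end

section
/- Let ρ be a density matrix on ℂ²⊗ℂ²⊗ℂ² and ρ̃ = (σ_y^{⊗3}) ρ^T (σ_y^{⊗3}). Then P := ρ + ρ̃ is positive semidefinite with trace 2, and X₃ := ρ_{AB}⊗I + (ρ_{AC} on qubits 1,3) + I⊗ρ_{BC} satisfies X₃ = D + P, where D := ρ_A⊗I⊗I + I⊗ρ_B⊗I + I⊗I⊗ρ_C − I. -/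
open Matrix Finset ComplexOrder

lemma Y3_herm : Y3ᴴ = Y3 := by
  ext ⟨a,b,c⟩ ⟨a',b',c'⟩
  simp only [Matrix.conjTranspose_apply, Y3, sigmaY]
  fin_cases a <;> fin_cases b <;> fin_cases c <;> fin_cases a' <;> fin_cases b' <;> fin_cases c' <;>
    simp

lemma Y3_sq : Y3 * Y3 = 1 := by
  ext ⟨a,b,c⟩ ⟨a',b',c'⟩
  simp only [Matrix.mul_apply, Fintype.sum_prod_type, Fin.sum_univ_two, Y3, sigmaY,
    Matrix.one_apply]
  fin_cases a <;> fin_cases b <;> fin_cases c <;> fin_cases a' <;> fin_cases b' <;> fin_cases c' <;>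
    norm_num [Prod.ext_iff, Complex.ext_iff]

set_option maxHeartbeats 2000000 in
lemma stmt5_key (ρ : Matrix Q3 Q3 ℂ) (ht : ρ.trace = 1) :
    embAB (margAB ρ) + embAC (margAC ρ) + embBC (margBC ρ) =
      (embA (margA ρ) + embB (margB ρ) + embC (margC ρ) - 1) + (ρ + Y3 * ρᵀ * Y3) := by
  rw [Matrix.trace] at ht
  simp only [Fintype.sum_prod_type, Fin.sum_univ_two, Matrix.diag_apply] at ht
  have ht' : ρ (0, 0, 0) (0, 0, 0) + ρ (0, 0, 1) (0, 0, 1) + ρ (0, 1, 0) (0, 1, 0) +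
      ρ (0, 1, 1) (0, 1, 1) + ρ (1, 0, 0) (1, 0, 0) + ρ (1, 0, 1) (1, 0, 1) +
      ρ (1, 1, 0) (1, 1, 0) + ρ (1, 1, 1) (1, 1, 1) = 1 := by
    rw [← ht]; ring
  clear ht
  norm_num [Prod.ext_iff, -Prod.mk_zero_zero, -Prod.mk_one_one] at ht'
  try ring_nf at ht'
  apply Matrix.ext
  simp only [Prod.forall]
  simp only [Matrix.add_apply, Matrix.sub_apply, Matrix.mul_apply, Matrix.one_apply,
    Matrix.transpose_apply, Fintype.sum_prod_type, Fin.sum_univ_two,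
    embAB, embAC, embBC, embA, embB, embC, margAB, margAC, margBC, margA, margB, margC,
    Y3, sigmaY]
  simp only [Fin.forall_fin_two]
  norm_num [Prod.ext_iff, -Prod.mk_zero_zero, -Prod.mk_one_one]
  repeat' apply And.intro
  all_goals (try ring_nf)
  all_goals (try simp only [Complex.I_sq])
  all_goals first | ring1 | linear_combination ht' | linear_combination -ht'


theorem stmt5 (ρ : Matrix Q3 Q3 ℂ) (hρ : IsDensity ρ) :
    (ρ + Y3 * ρᵀ * Y3).PosSemidef ∧ (ρ + Y3 * ρᵀ * Y3).trace = 2 ∧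
    embAB (margAB ρ) + embAC (margAC ρ) + embBC (margBC ρ) =
      (embA (margA ρ) + embB (margB ρ) + embC (margC ρ) - 1) + (ρ + Y3 * ρᵀ * Y3) := by
  refine ⟨?_, ?_, stmt5_key ρ hρ.2⟩
  · exact hρ.1.add (by simpa [Y3_herm] using (hρ.1.transpose.conjTranspose_mul_mul_same Y3))
  · rw [Matrix.trace_add, Matrix.trace_mul_cycle, Y3_sq, Matrix.one_mul,
      Matrix.trace_transpose, hρ.2]
    norm_num
end

section
/- Let r_A, r_B, r_C ∈ [0, 1/2] satisfy the polygon inequalities r_A ≤ r_B + r_C, r_B ≤ r_C + r_A, r_C ≤ r_A + r_B, and let D be the diagonal 8×8 matrix with entries 2−s, 1−r_A−r_B+r_C, 1−r_A+r_B−r_C, 1+r_A−r_B−r_C, −r_A+r_B+r_C, r_A−r_B+r_C, r_A+r_B−r_C, s−1, where s = r_A+r_B+r_C. Then s−1 is the minimal entry, and with δ = max(1−s, 0), the sums of the r largest entries satisfy K₁(D) ≤ 1+δ, K₂(D) ≤ 2+δ, K₃(D) ≤ 3+δ. -/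
open Matrix Finset ComplexOrder

/-- Sum of the `r` largest entries of a finitely indexed real vector. -/
noncomputable def kyFanVec {n : Type*} [Fintype n] (v : n → ℝ) (r : ℕ) : ℝ :=
  sSup {x : ℝ | ∃ s : Finset n, s.card = r ∧ x = ∑ i ∈ s, v i}

theorem stmt6 (rA rB rC : ℝ)
    (hA : rA ∈ Set.Icc 0 (1/2)) (hB : rB ∈ Set.Icc 0 (1/2)) (hC : rC ∈ Set.Icc 0 (1/2))
    (pA : rA ≤ rB + rC) (pB : rB ≤ rC + rA) (pC : rC ≤ rA + rB) :
    let s := rA + rB + rC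
    let δ := max (1 - s) 0
    let d : Fin 8 → ℝ := ![2 - s, 1 - rA - rB + rC, 1 - rA + rB - rC, 1 + rA - rB - rC,
      -rA + rB + rC, rA - rB + rC, rA + rB - rC, s - 1]
    (∀ i, s - 1 ≤ d i) ∧
      kyFanVec d 1 ≤ 1 + δ ∧ kyFanVec d 2 ≤ 2 + δ ∧ kyFanVec d 3 ≤ 3 + δ := by
  intro s δ d
  obtain ⟨hA0, hA1⟩ := hA
  obtain ⟨hB0, hB1⟩ := hB
  obtain ⟨hC0, hC1⟩ := hC
  have hδ1 : 1 - (rA + rB + rC) ≤ δ := le_max_left _ _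
  have hδ0 : (0:ℝ) ≤ δ := le_max_right _ _
  have hb0 : d 0 ≤ 1 + δ := by show 2 - (rA + rB + rC) ≤ 1 + δ; linarith
  have hb : ∀ i : Fin 8, i ≠ 0 → d i ≤ 1 := by
    intro i hi
    fin_cases i
    · exact absurd rfl hi
    · show 1 - rA - rB + rC ≤ 1; linarith
    · show 1 - rA + rB - rC ≤ 1; linarith
    · show 1 + rA - rB - rC ≤ 1; linarith
    · show -rA + rB + rC ≤ 1; linarith
    · show rA - rB + rC ≤ 1; linarith
    · show rA + rB - rC ≤ 1; linarith
    · show rA + rB + rC - 1 ≤ 1; linarith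
  have hbd : ∀ i : Fin 8, d i ≤ 1 + (if i = 0 then δ else 0) := by
    intro i
    split
    · next h => exact h ▸ hb0
    · next h => simpa using hb i h
  have key : ∀ (r : ℕ) (t : Finset (Fin 8)), t.card = r → ∑ i ∈ t, d i ≤ r + δ := by
    intro r t ht
    calc ∑ i ∈ t, d i ≤ ∑ i ∈ t, (1 + (if i = 0 then δ else 0)) :=
          Finset.sum_le_sum fun i _ => hbd i
      _ = t.card + ∑ i ∈ t, (if i = 0 then δ else 0) := by
          rw [Finset.sum_add_distrib, Finset.sum_const, nsmul_eq_mul, mul_one]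
      _ ≤ r + δ := by
          rw [ht, Finset.sum_ite_eq' t 0 (fun _ => δ)]
          split <;> simp [hδ0]
  refine ⟨?_, ?_, ?_, ?_⟩
  · intro i
    fin_cases i
    · show rA + rB + rC - 1 ≤ 2 - (rA + rB + rC); linarith
    · show rA + rB + rC - 1 ≤ 1 - rA - rB + rC; linarith
    · show rA + rB + rC - 1 ≤ 1 - rA + rB - rC; linarith
    · show rA + rB + rC - 1 ≤ 1 + rA - rB - rC; linarith
    · show rA + rB + rC - 1 ≤ -rA + rB + rC; linarith
    · show rA + rB + rC - 1 ≤ rA - rB + rC; linarith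
    · show rA + rB + rC - 1 ≤ rA + rB - rC; linarith
    · show rA + rB + rC - 1 ≤ rA + rB + rC - 1; linarith
  · apply Real.sSup_le
    · rintro x ⟨t, ht, rfl⟩
      simpa using key 1 t ht
    · linarith
  · apply Real.sSup_le
    · rintro x ⟨t, ht, rfl⟩
      simpa using key 2 t ht
    · linarith
  · apply Real.sSup_le
    · rintro x ⟨t, ht, rfl⟩
      simpa using key 3 t ht
    · linarith
end

section
/- (Polygon inequality for three-qubit pure states) Let |ψ⟩ be a unit vector in ℂ²⊗ℂ²⊗ℂ² and let r_A, r_B, r_C denote the smaller eigenvalue of each single-qubit reduced density matrix ρ_A, ρ_B, ρ_C. Then 0 ≤ r_A, r_B, r_C ≤ 1/2 and r_A ≤ r_B + r_C, r_B ≤ r_C + r_A, r_C ≤ r_A + r_B. -/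
open Matrix Finset ComplexOrder

/-!
For a pure state the reduced eigenvalues are `r_X ≤ 1/2 ≤ λ_X` with `r_X + λ_X = 1`, so
`r_A ≤ r_B + r_C` is `λ_B + λ_C ≤ 1 + λ_A`. Let `b`, `c` be top eigenvectors of `ρ_B`, `ρ_C` and
`P_b`, `P_c` the rank-one projections acting on qubits `B`, `C`. Then
`λ_B + λ_C = ‖P_b ψ‖² + ‖P_c ψ‖² ≤ ‖ψ‖² + ‖P_b P_c ψ‖²`, and `P_b P_c ψ = F ⊗ b ⊗ c` where
Cauchy–Schwarz against `ρ_A` gives `‖F‖² ≤ λ_A`. Relabelling the qubits cyclically gives the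
other two inequalities.
-/

open scoped InnerProductSpace

section Hermitian

variable {n m : Type*} [Fintype n] [Fintype m]

lemma star_dotProduct_self_eq_sum_norm_sq (x : n → ℂ) :
    star x ⬝ᵥ x = ((∑ i, ‖x i‖ ^ 2 : ℝ) : ℂ) := by
  simp [dotProduct, ← Complex.mul_conj', mul_comm]

lemma norm_dotProduct_sq_le (x y : n → ℂ) :
    ‖x ⬝ᵥ y‖ ^ 2 ≤ (∑ i, ‖x i‖ ^ 2) * ∑ i, ‖y i‖ ^ 2 :=
  calc ‖x ⬝ᵥ y‖ ^ 2 ≤ (∑ i, ‖x i‖ * ‖y i‖) ^ 2 := by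
        gcongr
        simpa only [dotProduct, norm_mul] using norm_sum_le Finset.univ (fun i => x i * y i)
    _ ≤ _ := Finset.sum_mul_sq_le_sq_mul_sq _ _ _

lemma star_dotProduct_mul_conjTranspose_mulVec (M : Matrix n m ℂ) (x : n → ℂ) :
    star x ⬝ᵥ (M * Mᴴ) *ᵥ x = ((∑ j, ‖(star x ᵥ* M) j‖ ^ 2 : ℝ) : ℂ) := by
  rw [← mulVec_mulVec, dotProduct_mulVec, ← star_star x, ← star_vecMul, star_star,
    dotProduct_comm, star_dotProduct_self_eq_sum_norm_sq]

variable [DecidableEq n]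

lemma Matrix.IsHermitian.re_star_dotProduct_mulVec_le {A : Matrix n n ℂ} (hA : A.IsHermitian)
    {l : ℝ} (hl : ∀ i, hA.eigenvalues i ≤ l) (x : n → ℂ) :
    (star x ⬝ᵥ A *ᵥ x).re ≤ l * ∑ i, ‖x i‖ ^ 2 := by
  set e := hA.eigenvectorBasis
  set x' := WithLp.toLp 2 x
  have hcoef (i : n) :
      ⟪e i, WithLp.toLp 2 (A *ᵥ x)⟫_ℂ = hA.eigenvalues i * ⟪e i, x'⟫_ℂ := by
    have hAe : toEuclideanLin A (e i) = (hA.eigenvalues i : ℂ) • e i := by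
      ext j
      simpa using congrFun (hA.mulVec_eigenvectorBasis i) j
    have := (isSymmetric_toEuclideanLin_iff.mpr hA) (e i) x'
    rw [hAe, inner_smul_left, Complex.conj_ofReal] at this
    simpa [x'] using this.symm
  have hquad : star x ⬝ᵥ A *ᵥ x = ∑ i, ((hA.eigenvalues i * ‖⟪e i, x'⟫_ℂ‖ ^ 2 : ℝ) : ℂ) := by
    rw [dotProduct_comm, ← EuclideanSpace.inner_toLp_toLp, ← e.sum_inner_mul_inner]
    refine Finset.sum_congr rfl fun i _ => ?_
    rw [hcoef, ← inner_conj_symm, mul_left_comm, Complex.conj_mul']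
    push_cast
    rfl
  calc (star x ⬝ᵥ A *ᵥ x).re = ∑ i, hA.eigenvalues i * ‖⟪e i, x'⟫_ℂ‖ ^ 2 := by
        rw [hquad, ← Complex.ofReal_sum, Complex.ofReal_re]
    _ ≤ ∑ i, l * ‖⟪e i, x'⟫_ℂ‖ ^ 2 := by gcongr with i; exact hl i
    _ = l * ∑ i, ‖x i‖ ^ 2 := by
        rw [← Finset.mul_sum, e.sum_sq_norm_inner_right, EuclideanSpace.norm_sq_eq]

lemma Matrix.IsHermitian.exists_re_star_dotProduct_mulVec_eq {A : Matrix n n ℂ}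
    (hA : A.IsHermitian) (i : n) :
    ∃ x : n → ℂ, ∑ j, ‖x j‖ ^ 2 = 1 ∧ (star x ⬝ᵥ A *ᵥ x).re = hA.eigenvalues i := by
  refine ⟨hA.eigenvectorBasis i, ?_, (hA.eigenvalues_eq i).symm⟩
  rw [← EuclideanSpace.norm_sq_eq, hA.eigenvectorBasis.orthonormal.1 i, one_pow]

lemma sum_norm_mulVec_sq_le_of_eigenvalues_le {M : Matrix n m ℂ} {A : Matrix n n ℂ}
    (hA : A.IsHermitian) (hMA : M * Mᴴ = A) {l : ℝ} (hl : ∀ i, hA.eigenvalues i ≤ l)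
    (hl0 : 0 ≤ l) (y : m → ℂ) :
    ∑ i, ‖(M *ᵥ y) i‖ ^ 2 ≤ l * ∑ j, ‖y j‖ ^ 2 := by
  subst hMA
  set F := M *ᵥ y
  set N := ∑ i, ‖F i‖ ^ 2
  have hN : (N : ℂ) = (star F ᵥ* M) ⬝ᵥ y := by
    rw [← dotProduct_mulVec, star_dotProduct_self_eq_sum_norm_sq]
  have hgram : ∑ j, ‖(star F ᵥ* M) j‖ ^ 2 ≤ l * N := by
    have := hA.re_star_dotProduct_mulVec_le hl F
    rwa [star_dotProduct_mul_conjTranspose_mulVec, Complex.ofReal_re] at this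
  have hsq : N ^ 2 ≤ l * N * ∑ j, ‖y j‖ ^ 2 :=
    calc N ^ 2 = ‖(star F ᵥ* M) ⬝ᵥ y‖ ^ 2 := by
          rw [← hN, Complex.norm_real, Real.norm_of_nonneg (by positivity)]
      _ ≤ (∑ j, ‖(star F ᵥ* M) j‖ ^ 2) * ∑ j, ‖y j‖ ^ 2 := norm_dotProduct_sq_le _ _
      _ ≤ l * N * ∑ j, ‖y j‖ ^ 2 := by gcongr
  rcases (show 0 ≤ N by positivity).eq_or_lt with h0 | hpos
  · rw [← h0]; positivity
  · nlinarith

end Hermitian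

lemma Matrix.IsHermitian.exists_re_star_dotProduct_mulVec_eq_max
    {A : Matrix (Fin 2) (Fin 2) ℂ} (hA : A.IsHermitian) :
    ∃ x : Fin 2 → ℂ, ∑ j, ‖x j‖ ^ 2 = 1 ∧
      (star x ⬝ᵥ A *ᵥ x).re = max (hA.eigenvalues 0) (hA.eigenvalues 1) := by
  rcases max_choice (hA.eigenvalues 0) (hA.eigenvalues 1) with h | h <;> rw [h] <;>
    exact hA.exists_re_star_dotProduct_mulVec_eq _

lemma Matrix.IsHermitian.eigenvalues_zero_add_one {A : Matrix (Fin 2) (Fin 2) ℂ}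
    (hA : A.IsHermitian) (htr : A.trace = 1) : hA.eigenvalues 0 + hA.eigenvalues 1 = 1 := by
  rw [hA.trace_eq_sum_eigenvalues, Fin.sum_univ_two] at htr
  simpa using congrArg Complex.re htr

lemma IsDensity.min_eigenvalues_nonneg {ρ : Matrix (Fin 2) (Fin 2) ℂ} (hρ : IsDensity ρ)
    (hH : ρ.IsHermitian) : 0 ≤ min (hH.eigenvalues 0) (hH.eigenvalues 1) :=
  le_min (hρ.1.eigenvalues_nonneg 0) (hρ.1.eigenvalues_nonneg 1)

lemma IsDensity.min_eigenvalues_le_half {ρ : Matrix (Fin 2) (Fin 2) ℂ} (hρ : IsDensity ρ)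
    (hH : ρ.IsHermitian) : min (hH.eigenvalues 0) (hH.eigenvalues 1) ≤ 1 / 2 := by
  have := hH.eigenvalues_zero_add_one hρ.2
  have := min_add_max (hH.eigenvalues 0) (hH.eigenvalues 1)
  have := min_le_max (a := hH.eigenvalues 0) (b := hH.eigenvalues 1)
  linarith

/-- `‖(P_u ⊗ 1) x‖² + ‖(1 ⊗ P_v) x‖² ≤ ‖x‖² + ‖(P_u ⊗ P_v) x‖²` for unit `u`, `v`. -/
lemma sum_norm_sq_contract_add_le (x : Fin 2 → Fin 2 → ℂ) {u v : Fin 2 → ℂ}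
    (hu : ∑ j, ‖u j‖ ^ 2 = 1) (hv : ∑ k, ‖v k‖ ^ 2 = 1) :
    ∑ k, ‖∑ j, star (u j) * x j k‖ ^ 2 + ∑ j, ‖∑ k, star (v k) * x j k‖ ^ 2
      ≤ ∑ j, ∑ k, ‖x j k‖ ^ 2 + ‖∑ j, ∑ k, star (u j) * star (v k) * x j k‖ ^ 2 := by
  -- Parseval in the product basis `{u, u⊥} ⊗ {v, v⊥}`, where `u⊥ = (-ū₁, ū₀)`: `t = ⟨u⊥ ⊗ v⊥, x⟩`.
  set t := u 1 * v 1 * x 0 0 - u 1 * v 0 * x 0 1 - u 0 * v 1 * x 1 0 + u 0 * v 0 * x 1 1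
  have parseval : (∑ j, ‖u j‖ ^ 2) * (∑ k, ‖v k‖ ^ 2) * ∑ j, ∑ k, ‖x j k‖ ^ 2
        + ‖∑ j, ∑ k, star (u j) * star (v k) * x j k‖ ^ 2
      = (∑ k, ‖v k‖ ^ 2) * ∑ k, ‖∑ j, star (u j) * x j k‖ ^ 2
        + (∑ j, ‖u j‖ ^ 2) * ∑ j, ‖∑ k, star (v k) * x j k‖ ^ 2
        + ‖t‖ ^ 2 := by
    apply Complex.ofReal_injective
    push_cast
    simp only [t, ← Complex.mul_conj', Fin.sum_univ_two, map_add, map_sub, map_mul,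
      Complex.star_def, Complex.conj_conj]
    ring
  rw [hu, hv] at parseval
  linarith [sq_nonneg ‖t‖]

def sliceA (ψ : Q3 → ℂ) : Matrix (Fin 2) (Fin 2 × Fin 2) ℂ := fun a q => ψ (a, q.1, q.2)

lemma margA_projQ3 (ψ : Q3 → ℂ) : margA (projQ3 ψ) = sliceA ψ * (sliceA ψ)ᴴ := by
  ext i j
  simp [margA, projQ3, sliceA, mul_apply, Fintype.sum_prod_type]

def rotQ3 : Q3 ≃ Q3 where
  toFun p := (p.2.2, p.1, p.2.1)
  invFun p := (p.2.1, p.2.2, p.1)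
  left_inv _ := rfl
  right_inv _ := rfl

lemma margA_projQ3_comp_rotQ3 (ψ : Q3 → ℂ) :
    margA (projQ3 (ψ ∘ rotQ3)) = margB (projQ3 ψ) := by
  ext i j
  exact Finset.sum_comm

lemma margB_projQ3_comp_rotQ3 (ψ : Q3 → ℂ) :
    margB (projQ3 (ψ ∘ rotQ3)) = margC (projQ3 ψ) := by
  ext i j
  exact Finset.sum_comm

lemma margC_projQ3_comp_rotQ3 (ψ : Q3 → ℂ) :
    margC (projQ3 (ψ ∘ rotQ3)) = margA (projQ3 ψ) := rfl

lemma sum_norm_sq_comp_rotQ3 (ψ : Q3 → ℂ) :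
    ∑ p, ‖(ψ ∘ rotQ3) p‖ ^ 2 = ∑ p, ‖ψ p‖ ^ 2 :=
  Equiv.sum_comp rotQ3 fun p => ‖ψ p‖ ^ 2

lemma isDensity_margA {ψ : Q3 → ℂ} (hψ : ∑ p, ‖ψ p‖ ^ 2 = 1) :
    IsDensity (margA (projQ3 ψ)) := by
  refine ⟨margA_projQ3 ψ ▸ posSemidef_self_mul_conjTranspose _, ?_⟩
  rw [← Complex.ofReal_one, ← hψ]
  push_cast
  simp [trace, margA, projQ3, Fintype.sum_prod_type, Complex.mul_conj']

lemma isDensity_margB {ψ : Q3 → ℂ} (hψ : ∑ p, ‖ψ p‖ ^ 2 = 1) :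
    IsDensity (margB (projQ3 ψ)) := by
  rw [← margA_projQ3_comp_rotQ3]
  exact isDensity_margA ((sum_norm_sq_comp_rotQ3 ψ).trans hψ)

lemma isDensity_margC {ψ : Q3 → ℂ} (hψ : ∑ p, ‖ψ p‖ ^ 2 = 1) :
    IsDensity (margC (projQ3 ψ)) := by
  rw [← margB_projQ3_comp_rotQ3]
  exact isDensity_margB ((sum_norm_sq_comp_rotQ3 ψ).trans hψ)

lemma re_star_dotProduct_margB_mulVec (ψ : Q3 → ℂ) (b : Fin 2 → ℂ) :
    (star b ⬝ᵥ margB (projQ3 ψ) *ᵥ b).re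
      = ∑ a, ∑ k, ‖∑ j, star (b j) * ψ (a, j, k)‖ ^ 2 := by
  rw [← margA_projQ3_comp_rotQ3, margA_projQ3, star_dotProduct_mul_conjTranspose_mulVec,
    Complex.ofReal_re, Fintype.sum_prod_type, Finset.sum_comm]
  rfl

lemma re_star_dotProduct_margC_mulVec (ψ : Q3 → ℂ) (c : Fin 2 → ℂ) :
    (star c ⬝ᵥ margC (projQ3 ψ) *ᵥ c).re
      = ∑ a, ∑ j, ‖∑ k, star (c k) * ψ (a, j, k)‖ ^ 2 := by
  rw [← margB_projQ3_comp_rotQ3, ← margA_projQ3_comp_rotQ3, margA_projQ3,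
    star_dotProduct_mul_conjTranspose_mulVec, Complex.ofReal_re, Fintype.sum_prod_type]
  rfl

lemma re_star_dotProduct_margB_add_margC_mulVec_le {ψ : Q3 → ℂ} (hψ : ∑ p, ‖ψ p‖ ^ 2 = 1)
    {b c : Fin 2 → ℂ} (hb : ∑ j, ‖b j‖ ^ 2 = 1) (hc : ∑ k, ‖c k‖ ^ 2 = 1) :
    (star b ⬝ᵥ margB (projQ3 ψ) *ᵥ b).re + (star c ⬝ᵥ margC (projQ3 ψ) *ᵥ c).re
      ≤ 1 + ∑ a, ‖(sliceA ψ *ᵥ fun q => star (b q.1) * star (c q.2)) a‖ ^ 2 := by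
  have hF (a : Fin 2) : (sliceA ψ *ᵥ fun q => star (b q.1) * star (c q.2)) a
      = ∑ j, ∑ k, star (b j) * star (c k) * ψ (a, j, k) := by
    simp only [mulVec, dotProduct, sliceA, Fintype.sum_prod_type, mul_comm]
  have hone : (1 : ℝ) = ∑ a, ∑ j, ∑ k, ‖ψ (a, j, k)‖ ^ 2 := by
    rw [← hψ]
    simp only [Fintype.sum_prod_type]
  rw [re_star_dotProduct_margB_mulVec, re_star_dotProduct_margC_mulVec, hone,
    ← Finset.sum_add_distrib]
  simp_rw [hF]
  rw [← Finset.sum_add_distrib]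
  exact Finset.sum_le_sum fun a _ => sum_norm_sq_contract_add_le _ hb hc

/-- Stated for matrices equal to the marginals, so that it applies to cyclically relabelled states,
whose marginals agree with those of `ψ` only propositionally. -/
lemma min_eigenvalues_le_add {ψ : Q3 → ℂ} (hψ : ∑ p, ‖ψ p‖ ^ 2 = 1)
    {A B C : Matrix (Fin 2) (Fin 2) ℂ} (eA : margA (projQ3 ψ) = A) (eB : margB (projQ3 ψ) = B)
    (eC : margC (projQ3 ψ) = C) (hA : A.IsHermitian) (hB : B.IsHermitian) (hC : C.IsHermitian) :
    min (hA.eigenvalues 0) (hA.eigenvalues 1)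
      ≤ min (hB.eigenvalues 0) (hB.eigenvalues 1) + min (hC.eigenvalues 0) (hC.eigenvalues 1) := by
  subst eA eB eC
  obtain ⟨b, hb, hbB⟩ := hB.exists_re_star_dotProduct_mulVec_eq_max
  obtain ⟨c, hc, hcC⟩ := hC.exists_re_star_dotProduct_mulVec_eq_max
  have hbc : ∑ q : Fin 2 × Fin 2, ‖star (b q.1) * star (c q.2)‖ ^ 2 = 1 := by
    simp [Fintype.sum_prod_type, mul_pow, ← Finset.mul_sum, hb, hc]
  have hA0 : 0 ≤ max (hA.eigenvalues 0) (hA.eigenvalues 1) :=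
    le_max_of_le_left ((isDensity_margA hψ).1.eigenvalues_nonneg 0)
  have hF := sum_norm_mulVec_sq_le_of_eigenvalues_le hA (margA_projQ3 ψ).symm
    (fun i => by fin_cases i <;> simp) hA0 (fun q => star (b q.1) * star (c q.2))
  have key := re_star_dotProduct_margB_add_margC_mulVec_le hψ hb hc
  have := hA.eigenvalues_zero_add_one (isDensity_margA hψ).2
  have := hB.eigenvalues_zero_add_one (isDensity_margB hψ).2
  have := hC.eigenvalues_zero_add_one (isDensity_margC hψ).2
  have := min_add_max (hA.eigenvalues 0) (hA.eigenvalues 1)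
  have := min_add_max (hB.eigenvalues 0) (hB.eigenvalues 1)
  have := min_add_max (hC.eigenvalues 0) (hC.eigenvalues 1)
  rw [hbc, mul_one] at hF
  linarith

theorem stmt16 (ψ : Q3 → ℂ) (hψ : ∑ p, ‖ψ p‖ ^ 2 = 1)
    (hA : (margA (projQ3 ψ)).IsHermitian) (hB : (margB (projQ3 ψ)).IsHermitian)
    (hC : (margC (projQ3 ψ)).IsHermitian) :
    let rA := min (hA.eigenvalues 0) (hA.eigenvalues 1)
    let rB := min (hB.eigenvalues 0) (hB.eigenvalues 1)
    let rC := min (hC.eigenvalues 0) (hC.eigenvalues 1)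
    (0 ≤ rA ∧ 0 ≤ rB ∧ 0 ≤ rC) ∧ (rA ≤ 1/2 ∧ rB ≤ 1/2 ∧ rC ≤ 1/2) ∧
      rA ≤ rB + rC ∧ rB ≤ rC + rA ∧ rC ≤ rA + rB := by
  intro rA rB rC
  have dA := isDensity_margA hψ
  have dB := isDensity_margB hψ
  have dC := isDensity_margC hψ
  have hψ₁ := (sum_norm_sq_comp_rotQ3 ψ).trans hψ
  have hψ₂ := (sum_norm_sq_comp_rotQ3 _).trans hψ₁
  refine ⟨⟨dA.min_eigenvalues_nonneg hA, dB.min_eigenvalues_nonneg hB,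
      dC.min_eigenvalues_nonneg hC⟩,
    ⟨dA.min_eigenvalues_le_half hA, dB.min_eigenvalues_le_half hB,
      dC.min_eigenvalues_le_half hC⟩,
    min_eigenvalues_le_add hψ rfl rfl rfl hA hB hC,
    min_eigenvalues_le_add hψ₁ (margA_projQ3_comp_rotQ3 ψ) (margB_projQ3_comp_rotQ3 ψ)
      (margC_projQ3_comp_rotQ3 ψ) hB hC hA,
    min_eigenvalues_le_add hψ₂ ((margA_projQ3_comp_rotQ3 _).trans (margB_projQ3_comp_rotQ3 ψ))
      ((margB_projQ3_comp_rotQ3 _).trans (margC_projQ3_comp_rotQ3 ψ))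
      ((margC_projQ3_comp_rotQ3 _).trans (margA_projQ3_comp_rotQ3 ψ)) hC hA hB⟩
end
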